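/- Let A be an abelian group fitting into an exact sequence 0 → A/ℓⁿA → Hₙ → Bₙ → 0 for each n, compatible with projections, where Hₙ are finite abelian groups of ℓ-power order. If A is finitely generated, then after taking inverse limits one obtains an injection A ⊗ ℤ_ℓ → lim Hₙ, and hence rank_ℤ(A) ≤ rank_{ℤ_ℓ}(lim Hₙ). -/

import Mathlib

/-!
Let `ℓ` be a prime and `A` a finitely generated abelian group together with compatible
injections `A/ℓⁿA → Hₙ` into an inverse system `(Hₙ)` of finite abelian groups of
`ℓ`-power order (finite `ℤ_ℓ`-modules).  Then taking inverse limits yields an injection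
`A ⊗ ℤ_ℓ → lim Hₙ`, and hence `rank_ℤ A ≤ rank_{ℤ_ℓ} (lim Hₙ)`.
-/

open TensorProduct

/-- The inverse limit of an inverse system of `ℤ_ℓ`-modules, as a submodule of the
product. -/
def padicInvLim (ℓ : ℕ) [Fact ℓ.Prime] (H : ℕ → Type) [∀ n, AddCommGroup (H n)]
    [∀ n, Module ℤ_[ℓ] (H n)] (g : ∀ n, H (n + 1) →ₗ[ℤ_[ℓ]] H n) :
    Submodule ℤ_[ℓ] (∀ n, H n) where
  carrier := {x | ∀ n, g n (x (n + 1)) = x n}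
  add_mem' {x y} hx hy := fun n => by simp [hx n, hy n]
  zero_mem' := fun n => by simp
  smul_mem' c x hx := fun n => by simp [hx n]

/-!
Let `φ : ℤ_ℓ ⊗ A → lim Hₙ` be the base change of the compatible maps `A → A/ℓⁿA → Hₙ`.
Fix `n` and let `ℓᵏ` kill the finite `ℤ_ℓ`-module `Hₙ`. Any `x` can be written
`1 ⊗ a + ℓⁿ⁺ᵏ y`, and the `n`-th component of `φ x` is then the image of `a` in `Hₙ`; so if
`φ x = 0`, injectivity of `A/ℓⁿA → Hₙ` gives `a ∈ ℓⁿA`, whence `x ∈ ℓⁿ (ℤ_ℓ ⊗ A)`. As `A` is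
finitely generated, `ℤ_ℓ ⊗ A` is a finite module over the noetherian local ring `ℤ_ℓ`, so by
Krull's intersection theorem `x = 0`. The rank bound follows because `ℤ_ℓ` is flat over `ℤ`,
so base change preserves linear independence.
-/

namespace PadicInt

variable (p : ℕ) [Fact p.Prime]

theorem exists_pow_smul_eq_zero_of_finite (M : Type*) [AddCommGroup M] [Module ℤ_[p] M]
    [Finite M] : ∃ k : ℕ, ∀ m : M, (p : ℤ_[p]) ^ k • m = 0 := by
  set N := Nat.card M
  -- `N` kills `M`, and the prime-to-`p` part of `N` is a unit of `ℤ_[p]`.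
  have hunit : IsUnit ((N / p ^ N.factorization p : ℕ) : ℤ_[p]) :=
    isUnit_iff.mpr <| norm_natCast_eq_one_iff.mpr <| Nat.coprime_ordCompl Fact.out Nat.card_pos.ne'
  refine ⟨N.factorization p, fun m => hunit.smul_left_cancel.mp ?_⟩
  rw [smul_zero, smul_smul, ← Nat.cast_pow, ← Nat.cast_mul, mul_comm,
    Nat.ordProj_mul_ordCompl_eq_self, Nat.cast_smul_eq_nsmul, card_nsmul_eq_zero']

theorem exists_eq_one_tmul_add_pow_smul (A : Type*) [AddCommGroup A] (n : ℕ)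
    (x : ℤ_[p] ⊗[ℤ] A) :
    ∃ (a : A) (y : ℤ_[p] ⊗[ℤ] A), x = (1 : ℤ_[p]) ⊗ₜ a + (p : ℤ_[p]) ^ n • y := by
  induction x using TensorProduct.induction_on with
  | zero => exact ⟨0, 0, by simp⟩
  | tmul c a =>
    obtain ⟨d, hd⟩ := Ideal.mem_span_singleton'.mp (appr_spec n c)
    refine ⟨c.appr n • a, d ⊗ₜ a, ?_⟩
    rw [tmul_smul, smul_tmul', smul_tmul', nsmul_eq_mul, smul_eq_mul, mul_one, ← add_tmul]
    congr 1
    linear_combination -hd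
  | add x y hx hy =>
    obtain ⟨a, u, rfl⟩ := hx
    obtain ⟨b, w, rfl⟩ := hy
    exact ⟨a + b, u + w, by rw [tmul_add, smul_add]; abel⟩

variable {p} in
theorem eq_zero_of_forall_exists_eq_pow_smul {M : Type*} [AddCommGroup M] [Module ℤ_[p] M]
    [Module.Finite ℤ_[p] M] {x : M} (hx : ∀ n : ℕ, ∃ y : M, x = (p : ℤ_[p]) ^ n • y) :
    x = 0 := by
  refine IsHausdorff.haus (I := IsLocalRing.maximalIdeal ℤ_[p]) inferInstance x fun n => ?_
  obtain ⟨y, rfl⟩ := hx n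
  rw [SModEq.zero, maximalIdeal_eq_span_p, Ideal.span_singleton_pow]
  exact Submodule.smul_mem_smul (Ideal.mem_span_singleton_self _) trivial

end PadicInt

universe u in
theorem Module.Flat.rank_le_rank_baseChange {R : Type*} {S M : Type u} [CommRing R] [CommRing S]
    [Nontrivial S] [Algebra R S] [Module.Flat R S] [AddCommGroup M] [Module R M]
    [HasRankNullity.{u} R] : Module.rank R M ≤ Module.rank S (S ⊗[R] M) := by
  obtain ⟨s, hs, hli⟩ := exists_set_linearIndependent R M
  rw [← hs]
  exact (linearIndependent_one_tmul (S := S) hli).cardinal_le_rank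

namespace padicInvLim

variable {ℓ : ℕ} [Fact ℓ.Prime] {H : ℕ → Type} [∀ n, AddCommGroup (H n)]
  [∀ n, Module ℤ_[ℓ] (H n)] {g : ∀ n, H (n + 1) →ₗ[ℤ_[ℓ]] H n} {A : Type*} [AddCommGroup A]

def lift (u : ∀ n, A →+ H n) (hu : ∀ n a, g n (u (n + 1) a) = u n a) :
    A →+ padicInvLim ℓ H g where
  toFun a := ⟨fun n => u n a, fun n => hu n a⟩
  map_zero' := by ext n; simp
  map_add' a b := by ext n; simp

theorem injective_liftBaseChange_lift [Module.Finite ℤ A] [∀ n, Finite (H n)]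
    (u : ∀ n, A →+ H n) (hu : ∀ n a, g n (u (n + 1) a) = u n a)
    (hker : ∀ n a, u n a = 0 → ∃ b : A, (ℓ : ℤ) ^ n • b = a) :
    Function.Injective ((lift u hu).toIntLinearMap.liftBaseChange ℤ_[ℓ]) := by
  refine (injective_iff_map_eq_zero _).mpr fun x hx =>
    PadicInt.eq_zero_of_forall_exists_eq_pow_smul (p := ℓ) fun n => ?_
  obtain ⟨k, hk⟩ := PadicInt.exists_pow_smul_eq_zero_of_finite ℓ (H n)
  obtain ⟨a, y, rfl⟩ := PadicInt.exists_eq_one_tmul_add_pow_smul ℓ A (n + k) x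
  have hua : u n a = 0 := by
    have := congrArg (fun z : padicInvLim ℓ H g => (z : ∀ n, H n) n) hx
    simpa [lift, pow_add, mul_smul, hk] using this
  obtain ⟨b, rfl⟩ := hker n a hua
  refine ⟨1 ⊗ₜ b + (ℓ : ℤ_[ℓ]) ^ k • y, ?_⟩
  rw [smul_add, smul_smul, ← pow_add, tmul_smul, ← Int.cast_smul_eq_zsmul ℤ_[ℓ], Int.cast_pow,
    Int.cast_natCast]

end padicInvLim

theorem tensor_padic_injects_into_invLim
    (ℓ : ℕ) [Fact ℓ.Prime]
    (A : Type) [AddCommGroup A] (hA : AddGroup.FG A)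
    (H : ℕ → Type) [∀ n, AddCommGroup (H n)] [∀ n, Module ℤ_[ℓ] (H n)]
    [∀ n, Finite (H n)]
    (g : ∀ n, H (n + 1) →ₗ[ℤ_[ℓ]] H n)
    -- the injections `A/ℓⁿA → Hₙ`
    (f : ∀ n, (A ⧸ LinearMap.range (((ℓ : ℤ) ^ n) • (LinearMap.id : A →ₗ[ℤ] A))) →+ H n)
    (hinj : ∀ n, Function.Injective (f n))
    -- compatibility with the transition maps and the projections `A/ℓ^{n+1}A → A/ℓⁿA`
    (hcompat : ∀ n (x : A),
      g n (f (n + 1) (Submodule.Quotient.mk x)) = f n (Submodule.Quotient.mk x)) :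
    ∃ φ : (ℤ_[ℓ] ⊗[ℤ] A) →ₗ[ℤ_[ℓ]] padicInvLim ℓ H g,
      Function.Injective φ ∧
        Module.rank ℤ A ≤ Module.rank ℤ_[ℓ] (padicInvLim ℓ H g) := by
  have : Module.Finite ℤ A := Module.Finite.iff_addGroup_fg.mpr hA
  let u n : A →+ H n := (f n).comp (Submodule.mkQ _).toAddMonoidHom
  have hker : ∀ n a, u n a = 0 → ∃ b : A, (ℓ : ℤ) ^ n • b = a := fun n a ha =>
    (Submodule.Quotient.mk_eq_zero _).mp ((map_eq_zero_iff _ (hinj n)).mp ha)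
  have hφ := padicInvLim.injective_liftBaseChange_lift u hcompat hker
  refine ⟨_, hφ, ?_⟩
  calc Module.rank ℤ A ≤ Module.rank ℤ_[ℓ] (ℤ_[ℓ] ⊗[ℤ] A) := Module.Flat.rank_le_rank_baseChange
    _ ≤ Module.rank ℤ_[ℓ] (padicInvLim ℓ H g) := LinearMap.rank_le_of_injective _ hφ
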